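/- arXiv:2507.12342 — 3 statements merged into one kernel-verified Lean document; each statement's English description precedes it below -/
import Mathlib

section
/- There is an absolute constant C such that the following holds. Let q0, q1 be coprime positive integers with q1 ≥ 3, let q = q0·q1, let χ be a non-principal Dirichlet character modulo q1, let a be an integer with gcd(a, q0) = 1, and let m be a positive integer with gcd(m, q) = 1. Then for every real x ≥ 2, |∑_{n ≤ x, gcd(n, m) = 1, n ≡ a (mod q0)} μ(n)^2 · χ(n) · f(n)| ≤ C · τ(m) · q^{1/2} · x^{1/2} · (log x) · (log q). -/
/-!
Let `h := μ² f * μ` (`sqfreeFmulMoebius`), so that `μ² f = h * 1`. It is multiplicative with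
`|h(p)| ≤ 1/p`, `|h(p²)| ≤ 1` and `h(p^k) = 0` for `k ≥ 3`; writing `e = r s²` with `r`
squarefree, `|h(e)| / √e ≤ r^(-3/2) / s`, hence `∑_{e ≤ X} |h(e)| / √e ≪ log X`.

Detecting `(n, m) = 1` by `∑_{t ∣ (n, m)} μ(t)` and expanding `μ² f = h * 1`, the sum becomes
`∑_{t ∣ m} ∑_{e ≤ X} μ(t) h(e) W(t, e)`, where `W(t, e)` is the sum of `χ(n)` over `n ≤ X` with
`lcm(t, e) ∣ n` and `n ≡ a (mod q0)`. These `n` form one progression of difference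
`lcm(t, e, q0)`: if `lcm(t, e)` is prime to `q1` its complete periods modulo `q1` cancel, so
`|W| ≤ q1`, and otherwise `χ` vanishes on it. Trivially `|W| ≤ X / e`, so `|W| ≤ √(q1 X / e)`.
-/

open Finset

/-- `f(n) = ∏_{p ∣ n} (1 + 1/p)⁻¹`. -/
noncomputable def fmul (n : ℕ) : ℝ := ∏ p ∈ n.primeFactors, ((1 : ℝ) + 1 / p)⁻¹

open ArithmeticFunction
open scoped ArithmeticFunction.Moebius

lemma fmul_mul {a b : ℕ} (ha : a ≠ 0) (hb : b ≠ 0) (h : a.Coprime b) :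
    fmul (a * b) = fmul a * fmul b := by
  simp only [fmul]
  rw [Nat.primeFactors_mul ha hb, prod_union h.disjoint_primeFactors]

lemma fmul_prime {p : ℕ} (hp : p.Prime) : fmul p = ((1 : ℝ) + 1 / p)⁻¹ := by
  rw [fmul, hp.primeFactors, prod_singleton]

lemma abs_fmul_prime_sub_one_le {p : ℕ} (hp : p.Prime) : |fmul p - 1| ≤ 1 / p := by
  have hp0 : (0 : ℝ) < p := by exact_mod_cast hp.pos
  have hf : fmul p - 1 = -(1 / (p + 1)) := by
    rw [fmul_prime hp]
    field_simp
    ring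
  rw [hf, abs_neg, abs_of_pos (by positivity)]
  gcongr
  linarith

lemma abs_fmul_prime_le_one {p : ℕ} (hp : p.Prime) : |fmul p| ≤ 1 := by
  rw [fmul_prime hp, abs_of_pos (by positivity)]
  exact inv_le_one_of_one_le₀ (le_add_of_nonneg_right (by positivity))

noncomputable def sqfreeFmul : ArithmeticFunction ℝ :=
  ⟨fun n => (μ n : ℝ) ^ 2 * fmul n, by simp⟩

lemma sqfreeFmul_apply (n : ℕ) : sqfreeFmul n = (μ n : ℝ) ^ 2 * fmul n := rfl

lemma isMultiplicative_sqfreeFmul : sqfreeFmul.IsMultiplicative := by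
  refine IsMultiplicative.iff_ne_zero.mpr ⟨by simp [sqfreeFmul_apply, fmul], ?_⟩
  intro a b ha hb hab
  simp only [sqfreeFmul_apply, isMultiplicative_moebius.map_mul_of_coprime hab,
    fmul_mul ha hb hab]
  push_cast
  ring

lemma sqfreeFmul_prime {p : ℕ} (hp : p.Prime) : sqfreeFmul p = fmul p := by
  simp [sqfreeFmul_apply, moebius_apply_prime hp]

lemma sqfreeFmul_prime_pow {p k : ℕ} (hp : p.Prime) (hk : 2 ≤ k) : sqfreeFmul (p ^ k) = 0 := by
  simp [sqfreeFmul_apply, moebius_apply_prime_pow hp (by omega : k ≠ 0), show k ≠ 1 by omega]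

noncomputable def sqfreeFmulMoebius : ArithmeticFunction ℝ := sqfreeFmul * μ

lemma isMultiplicative_sqfreeFmulMoebius : sqfreeFmulMoebius.IsMultiplicative :=
  isMultiplicative_sqfreeFmul.mul isMultiplicative_moebius.intCast

lemma sum_divisors_sqfreeFmulMoebius (n : ℕ) :
    ∑ e ∈ n.divisors, sqfreeFmulMoebius e = sqfreeFmul n := by
  rw [← coe_zeta_mul_apply, sqfreeFmulMoebius, mul_comm, mul_assoc, coe_moebius_mul_coe_zeta,
    mul_one]

lemma sqfreeFmulMoebius_prime_pow_succ {p : ℕ} (hp : p.Prime) (k : ℕ) :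
    sqfreeFmulMoebius (p ^ (k + 1)) = sqfreeFmul (p ^ (k + 1)) - sqfreeFmul (p ^ k) := by
  have h := sum_divisors_sqfreeFmulMoebius (p ^ (k + 1))
  rw [Nat.sum_divisors_prime_pow hp, sum_range_succ, ← Nat.sum_divisors_prime_pow hp,
    sum_divisors_sqfreeFmulMoebius] at h
  linarith

lemma abs_sqfreeFmulMoebius_prime_pow_le {p k : ℕ} (hp : p.Prime) (hk : k ≠ 0) :
    |sqfreeFmulMoebius (p ^ k)| ≤ 1 / (p : ℝ) ^ (k % 2) := by
  obtain ⟨k, rfl⟩ := Nat.exists_eq_succ_of_ne_zero hk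
  rw [sqfreeFmulMoebius_prime_pow_succ hp]
  rcases k with _ | _ | k
  · simpa [sqfreeFmul_prime hp, sqfreeFmul_apply, fmul] using abs_fmul_prime_sub_one_le hp
  · simpa [sqfreeFmul_prime_pow hp le_rfl, sqfreeFmul_prime hp] using abs_fmul_prime_le_one hp
  · simp [sqfreeFmul_prime_pow hp (by omega : 2 ≤ k + 1 + 1 + 1),
      sqfreeFmul_prime_pow hp (by omega : 2 ≤ k + 1 + 1)]

def sqfreePart (n : ℕ) : ℕ := ∏ p ∈ n.primeFactors, p ^ (n.factorization p % 2)

def sqrtSqPart (n : ℕ) : ℕ := ∏ p ∈ n.primeFactors, p ^ (n.factorization p / 2)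

lemma sqfreePart_pos (n : ℕ) : 0 < sqfreePart n :=
  prod_pos fun _ hp => pow_pos (Nat.pos_of_mem_primeFactors hp) _

lemma sqrtSqPart_pos (n : ℕ) : 0 < sqrtSqPart n :=
  prod_pos fun _ hp => pow_pos (Nat.pos_of_mem_primeFactors hp) _

lemma sqfreePart_mul_sqrtSqPart_sq {n : ℕ} (hn : n ≠ 0) :
    sqfreePart n * sqrtSqPart n ^ 2 = n := by
  conv_rhs => rw [Nat.prod_primeFactors_pow_factorization hn]
  rw [sqfreePart, sqrtSqPart, ← prod_pow, ← prod_mul_distrib]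
  refine prod_congr rfl fun p _ => ?_
  rw [← pow_mul, ← pow_add, Nat.mod_add_div']

lemma abs_sqfreeFmulMoebius_le {n : ℕ} (hn : n ≠ 0) :
    |sqfreeFmulMoebius n| ≤ 1 / sqfreePart n := by
  rw [isMultiplicative_sqfreeFmulMoebius.multiplicative_factorization _ hn,
    Nat.prod_factorization_eq_prod_primeFactors, abs_prod, sqfreePart, Nat.cast_prod, one_div,
    ← prod_inv_distrib]
  refine prod_le_prod (fun _ _ => abs_nonneg _) fun p hp => ?_
  rw [Nat.cast_pow, ← one_div]
  exact abs_sqfreeFmulMoebius_prime_pow_le (Nat.prime_of_mem_primeFactors hp)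
    (Finsupp.mem_support_iff.mp (by rwa [Nat.support_factorization]))

lemma summable_one_div_mul_sqrt : Summable fun r : ℕ => 1 / ((r : ℝ) * √r) := by
  convert Real.summable_one_div_nat_rpow.mpr (by norm_num : (1 : ℝ) < 3 / 2) using 3 with r
  rw [Real.sqrt_eq_rpow, ← Real.rpow_one_add' (Nat.cast_nonneg r) (by norm_num)]
  norm_num

lemma sum_Icc_one_div_le_one_add_log (X : ℕ) : ∑ s ∈ Icc 1 X, (1 : ℝ) / s ≤ 1 + Real.log X := by
  simpa [harmonic_eq_sum_Icc] using harmonic_le_one_add_log X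

lemma abs_sqfreeFmulMoebius_div_sqrt_le {e : ℕ} (he : e ≠ 0) :
    |sqfreeFmulMoebius e| / √e ≤
      1 / ((sqfreePart e : ℝ) * √(sqfreePart e)) * (1 / sqrtSqPart e) := by
  have hr : (0 : ℝ) < sqfreePart e := by exact_mod_cast sqfreePart_pos e
  have hs : (0 : ℝ) < sqrtSqPart e := by exact_mod_cast sqrtSqPart_pos e
  have hsqrt : √e = √(sqfreePart e) * sqrtSqPart e := by
    rw [← Real.sqrt_sq hs.le, ← Real.sqrt_mul hr.le]
    exact_mod_cast congrArg (fun n : ℕ => √n) (sqfreePart_mul_sqrtSqPart_sq he).symm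
  calc |sqfreeFmulMoebius e| / √e ≤ 1 / sqfreePart e / √e := by
        gcongr
        exact abs_sqfreeFmulMoebius_le he
    _ = _ := by
        rw [hsqrt]
        field_simp

lemma sum_abs_sqfreeFmulMoebius_div_sqrt_le (X : ℕ) :
    ∑ e ∈ Icc 1 X, |sqfreeFmulMoebius e| / √e ≤
      (∑' r : ℕ, 1 / ((r : ℝ) * √r)) * (1 + Real.log X) := by
  set g : ℕ × ℕ → ℝ := fun P => 1 / ((P.1 : ℝ) * √P.1) * (1 / P.2)
  set π : ℕ → ℕ × ℕ := fun e => (sqfreePart e, sqrtSqPart e)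
  have hne : ∀ e ∈ Icc 1 X, e ≠ 0 := fun e he => Nat.one_le_iff_ne_zero.mp (mem_Icc.mp he).1
  have hinj : Set.InjOn π (Icc 1 X) := by
    intro e he e' he' h
    rw [← sqfreePart_mul_sqrtSqPart_sq (hne e he), ← sqfreePart_mul_sqrtSqPart_sq (hne e' he')]
    simp_all [π]
  have hmaps : (Icc 1 X).image π ⊆ Icc 1 X ×ˢ Icc 1 X := by
    simp only [subset_iff, mem_image, mem_product, mem_Icc]
    rintro _ ⟨e, ⟨he1, heX⟩, rfl⟩
    have hr := sqfreePart_pos e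
    have hs := sqrtSqPart_pos e
    have hrs := sqfreePart_mul_sqrtSqPart_sq (n := e) (by omega)
    refine ⟨⟨hr, (Nat.le_mul_of_pos_right _ (by positivity)).trans (hrs.trans_le heX)⟩, hs, ?_⟩
    exact (Nat.le_self_pow two_ne_zero _).trans
      ((Nat.le_mul_of_pos_left _ hr).trans (hrs.trans_le heX))
  calc ∑ e ∈ Icc 1 X, |sqfreeFmulMoebius e| / √e ≤ ∑ e ∈ Icc 1 X, g (π e) :=
        sum_le_sum fun e he => abs_sqfreeFmulMoebius_div_sqrt_le (hne e he)
    _ = ∑ P ∈ (Icc 1 X).image π, g P := (sum_image hinj).symm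
    _ ≤ ∑ P ∈ Icc 1 X ×ˢ Icc 1 X, g P :=
        sum_le_sum_of_subset_of_nonneg hmaps fun _ _ _ => by positivity
    _ = (∑ r ∈ Icc 1 X, 1 / ((r : ℝ) * √r)) * ∑ s ∈ Icc 1 X, (1 : ℝ) / s :=
        by rw [sum_product, sum_mul_sum]
    _ ≤ (∑' r : ℕ, 1 / ((r : ℝ) * √r)) * (1 + Real.log X) := by
        gcongr ?_ * ?_
        · exact summable_one_div_mul_sqrt.sum_le_tsum _ fun _ _ => by positivity
        · exact sum_Icc_one_div_le_one_add_log X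

section CharacterSums

variable {q : ℕ} [NeZero q]

lemma sum_Ico_add_intCast_eq_sum {M : Type*} [AddCommMonoid M] (g : ZMod q → M) (N : ℤ) :
    ∑ n ∈ Ico N (N + q), g n = ∑ u, g u := by
  have hinj : Set.InjOn (Int.cast : ℤ → ZMod q) (Ico N (N + q)) := by
    intro n hn n' hn' h
    simp only [coe_Ico, Set.mem_Ico] at hn hn'
    have := Int.eq_zero_of_abs_lt_dvd ((ZMod.intCast_eq_intCast_iff_dvd_sub n n' q).mp h)
      (abs_sub_lt_iff.mpr ⟨by omega, by omega⟩)
    omega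
  have himage : (Ico N (N + q)).image (Int.cast : ℤ → ZMod q) = univ := by
    refine eq_univ_of_forall fun u => mem_image.mpr ⟨N + (u - N : ZMod q).val, ?_, by simp⟩
    have := ZMod.val_lt (u - N : ZMod q)
    simp only [mem_Ico]
    omega
  rw [← himage, sum_image hinj]

lemma norm_sum_Ico_le_of_sum_eq_zero {E : Type*} [SeminormedAddCommGroup E] (g : ZMod q → E)
    (hsum : ∑ u, g u = 0) (hg : ∀ u, ‖g u‖ ≤ 1) (a b : ℤ) : ‖∑ n ∈ Ico a b, g n‖ ≤ q := by
  have key : ∀ (L : ℕ) (a : ℤ), ‖∑ n ∈ Ico a (a + L), g n‖ ≤ q := by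
    intro L
    induction L using Nat.strong_induction_on with
    | _ L ih =>
      intro a
      rcases lt_or_ge L q with hL | hL
      · calc ‖∑ n ∈ Ico a (a + L), g n‖ ≤ ∑ n ∈ Ico a (a + L), (1 : ℝ) :=
              norm_sum_le_of_le _ fun n _ => hg n
          _ ≤ q := by simp [hL.le]
      · obtain ⟨L, rfl⟩ := Nat.exists_eq_add_of_le hL
        -- the first `q` terms form a complete period and cancel
        rw [Nat.cast_add, ← add_assoc, ← Ico_union_Ico_eq_Ico (b := a + q) (by omega) (by omega),
          sum_union (Ico_disjoint_Ico_consecutive _ _ _), sum_Ico_add_intCast_eq_sum, hsum,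
          zero_add]
        exact ih L (by have := NeZero.pos q; omega) _
  rcases le_or_gt a b with hab | hab
  · simpa [Int.toNat_of_nonneg (sub_nonneg.mpr hab)] using key (b - a).toNat a
  · simp [Ico_eq_empty_of_le hab.le]

variable (χ : DirichletCharacter ℂ q)

lemma norm_sum_Ico_filter_modEq_le (hχ : χ ≠ 1) {r : ℕ} (hr : 0 < r) (hrq : r.Coprime q)
    (a b v : ℤ) : ‖∑ x ∈ Ico a b with x ≡ v [ZMOD r], χ x‖ ≤ q := by
  rw [Int.Ico_filter_modEq_eq, Int.Ico_filter_dvd_eq _ _ (by exact_mod_cast hr), sum_map,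
    sum_map]
  simp only [Function.Embedding.coeFn_mk, Int.cast_add, Int.cast_mul, Int.cast_natCast]
  refine norm_sum_Ico_le_of_sum_eq_zero (fun u => χ (u * (r : ZMod q) + (v : ZMod q))) ?_
    (fun _ => χ.norm_le_one _) _ _
  rw [Fintype.sum_bijective (fun u : ZMod q => u * (r : ZMod q) + (v : ZMod q))
    ((Equiv.addRight _).bijective.comp (Units.mulRight_bijective (ZMod.unitOfCoprime r hrq)))
    _ (fun u => χ u) fun _ => rfl]
  exact MulChar.sum_eq_zero_of_ne_one hχ

lemma norm_sum_filter_dvd_le_modulus {q0 : ℕ} (hq0 : 0 < q0) (hcop : q0.Coprime q) (hχ : χ ≠ 1)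
    (d X : ℕ) (b : ZMod q0) :
    ‖∑ n ∈ Icc 1 X with d ∣ n ∧ ((n : ℤ) : ZMod q0) = b, χ n‖ ≤ q := by
  by_cases hd : d.Coprime q
  swap
  · rw [sum_eq_zero fun n hn => χ.map_nonunit fun hu => hd <|
      Nat.Coprime.coprime_dvd_left (mem_filter.mp hn).2.1 ((ZMod.isUnit_iff_coprime n q).mp hu),
      norm_zero]
    positivity
  obtain hempty | ⟨c, hc⟩ := ({n ∈ Icc 1 X | d ∣ n ∧ ((n : ℤ) : ZMod q0) = b}).eq_empty_or_nonempty
  · rw [hempty, sum_empty, norm_zero]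
    positivity
  simp only [mem_filter, mem_Icc] at hc
  obtain ⟨⟨hc1, -⟩, hdc, hcb⟩ := hc
  -- the summation set is a single residue class modulo `lcm d q0`
  set M := Int.lcm d q0
  have hM : 0 < M := Int.lcm_pos (by exact_mod_cast (Nat.pos_of_dvd_of_pos hdc hc1).ne') (by omega)
  have hset : {n ∈ Icc 1 X | d ∣ n ∧ ((n : ℤ) : ZMod q0) = b} =
      {n ∈ Ico 1 (X + 1) | n ≡ c [MOD M]} := by
    rw [← Ico_add_one_right_eq_Icc]
    refine filter_congr fun n _ => ?_
    rw [Nat.modEq_iff_dvd, Int.coe_lcm_dvd_iff, ← hcb, ZMod.intCast_eq_intCast_iff_dvd_sub,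
      dvd_sub_right (Int.natCast_dvd_natCast.mpr hdc), Int.natCast_dvd_natCast]
  have hcast : ∑ n ∈ Ico 1 (X + 1) with n ≡ c [MOD M], χ n =
      ∑ x ∈ ({n ∈ Ico 1 (X + 1) | n ≡ c [MOD M]}).map (Nat.castEmbedding : ℕ ↪ ℤ),
        χ (x : ZMod q) := by
    simp only [sum_map, Nat.castEmbedding_apply, Int.cast_natCast]
  rw [hset, hcast, Nat.Ico_filter_modEq_cast]
  exact norm_sum_Ico_filter_modEq_le χ hχ hM
    (Nat.Coprime.coprime_dvd_left (Nat.lcm_dvd_mul d q0) (hd.mul_left hcop)) _ _ _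

lemma norm_sum_filter_dvd_le_sqrt {q0 : ℕ} (hq0 : 0 < q0) (hcop : q0.Coprime q) (hχ : χ ≠ 1)
    (d X : ℕ) (b : ZMod q0) :
    ‖∑ n ∈ Icc 1 X with d ∣ n ∧ ((n : ℤ) : ZMod q0) = b, χ n‖ ≤ √(q * X / d) := by
  set S := ∑ n ∈ Icc 1 X with d ∣ n ∧ ((n : ℤ) : ZMod q0) = b, χ n
  have hcard : ‖S‖ ≤ X / d := by
    have hsub : {n ∈ Icc 1 X | d ∣ n ∧ ((n : ℤ) : ZMod q0) = b} ⊆ {n ∈ Ioc 0 X | d ∣ n} := by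
      intro n
      simp only [mem_filter, mem_Icc, mem_Ioc]
      omega
    calc ‖S‖ ≤ ∑ n ∈ Icc 1 X with d ∣ n ∧ ((n : ℤ) : ZMod q0) = b, (1 : ℝ) :=
          norm_sum_le_of_le _ fun n _ => χ.norm_le_one _
      _ ≤ #{n ∈ Ioc 0 X | d ∣ n} := by simpa using card_le_card hsub
      _ ≤ X / d := by
        rw [Nat.Ioc_filter_dvd_card_eq_div]
        exact Nat.cast_div_le
  refine Real.le_sqrt_of_sq_le ?_
  rw [sq, mul_div_assoc]
  exact mul_le_mul (norm_sum_filter_dvd_le_modulus χ hq0 hcop hχ d X b) hcard (norm_nonneg _)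
    (Nat.cast_nonneg q)

lemma norm_sum_filter_dvd_dvd_le {q0 : ℕ} (hq0 : 0 < q0) (hcop : q0.Coprime q) (hχ : χ ≠ 1)
    {t e : ℕ} (ht : t ≠ 0) (he : e ≠ 0) {X : ℕ} {x : ℝ} (hXx : (X : ℝ) ≤ x) (b : ZMod q0) :
    ‖∑ n ∈ (Icc 1 X).filter (fun n : ℕ => ((n : ℤ) : ZMod q0) = b) with t ∣ n ∧ e ∣ n, χ n‖ ≤
      √(q * x / e) := by
  have hset : ((Icc 1 X).filter (fun n : ℕ => ((n : ℤ) : ZMod q0) = b)).filter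
      (fun n => t ∣ n ∧ e ∣ n) =
      {n ∈ Icc 1 X | t.lcm e ∣ n ∧ ((n : ℤ) : ZMod q0) = b} := by
    rw [filter_filter]
    exact filter_congr fun n _ => by rw [Nat.lcm_dvd_iff, and_comm]
  have hle : (e : ℝ) ≤ t.lcm e := by
    exact_mod_cast Nat.le_of_dvd (Nat.lcm_pos (by omega) (by omega)) (Nat.dvd_lcm_right t e)
  rw [hset]
  refine (norm_sum_filter_dvd_le_sqrt χ hq0 hcop hχ _ X b).trans (Real.sqrt_le_sqrt ?_)
  have : (0 : ℝ) < e := by exact_mod_cast Nat.pos_of_ne_zero he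
  have : 0 ≤ x := (Nat.cast_nonneg X).trans hXx
  gcongr

end CharacterSums

lemma sum_mul_sum_filter_dvd {R : Type*} [CommSemiring R] (s D : Finset ℕ) (φ w : ℕ → R) :
    ∑ n ∈ s, (∑ d ∈ D with d ∣ n, φ d) * w n = ∑ d ∈ D, φ d * ∑ n ∈ s with d ∣ n, w n := by
  simp only [sum_filter, sum_mul, mul_sum, ite_mul, mul_ite, zero_mul, mul_zero]
  exact sum_comm

lemma sum_moebius_filter_dvd {R : Type*} [Ring R] {m : ℕ} (hm : m ≠ 0) (n : ℕ) :
    ∑ t ∈ m.divisors with t ∣ n, (μ t : R) = if n.Coprime m then 1 else 0 := by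
  have hdiv : {t ∈ m.divisors | t ∣ n} = (n.gcd m).divisors := by
    ext t
    simp only [mem_filter, Nat.mem_divisors, Nat.dvd_gcd_iff]
    have := (Nat.gcd_pos_of_pos_right n (Nat.pos_of_ne_zero hm)).ne'
    tauto
  have h := coe_mul_zeta_apply (f := (μ : ArithmeticFunction R)) (x := n.gcd m)
  rw [coe_moebius_mul_coe_zeta, one_apply] at h
  simpa only [hdiv, intCoe_apply, Nat.Coprime] using h.symm

lemma sum_coprime_sqfreeFmul_mul_eq {m : ℕ} (hm : m ≠ 0) {X : ℕ} (s : Finset ℕ)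
    (hs : s ⊆ Icc 1 X) (w : ℕ → ℂ) :
    ∑ n ∈ s with n.Coprime m, (sqfreeFmul n : ℂ) * w n =
      ∑ t ∈ m.divisors, ∑ e ∈ Icc 1 X,
        (μ t : ℂ) * sqfreeFmulMoebius e * ∑ n ∈ s with t ∣ n ∧ e ∣ n, w n := by
  have hF : ∀ n ∈ s, (sqfreeFmul n : ℂ) = ∑ e ∈ Icc 1 X with e ∣ n, (sqfreeFmulMoebius e : ℂ) := by
    intro n hn
    have hn := mem_Icc.mp (hs hn)
    have hdiv : n.divisors = {e ∈ Icc 1 X | e ∣ n} := by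
      ext e
      simp only [Nat.mem_divisors, mem_filter, mem_Icc]
      constructor
      · rintro ⟨he, -⟩
        exact ⟨⟨Nat.pos_of_dvd_of_pos he (by omega), (Nat.le_of_dvd (by omega) he).trans hn.2⟩, he⟩
      · rintro ⟨-, he⟩
        exact ⟨he, by omega⟩
    rw [← hdiv, ← sum_divisors_sqfreeFmulMoebius, Complex.ofReal_sum]
  calc ∑ n ∈ s with n.Coprime m, (sqfreeFmul n : ℂ) * w n
      = ∑ n ∈ s, (∑ t ∈ m.divisors with t ∣ n, (μ t : ℂ)) * ((sqfreeFmul n : ℂ) * w n) := by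
        rw [sum_filter]
        refine sum_congr rfl fun n _ => ?_
        rw [sum_moebius_filter_dvd hm]
        split_ifs <;> simp
    _ = ∑ t ∈ m.divisors, (μ t : ℂ) * ∑ n ∈ s with t ∣ n,
          (∑ e ∈ Icc 1 X with e ∣ n, (sqfreeFmulMoebius e : ℂ)) * w n := by
        rw [sum_mul_sum_filter_dvd]
        refine sum_congr rfl fun t _ => ?_
        rw [sum_congr rfl fun n hn => by rw [hF n (mem_filter.mp hn).1]]
    _ = _ := by
        simp only [sum_mul_sum_filter_dvd, mul_sum, filter_filter, mul_assoc]

lemma norm_sum_coprime_sqfreeFmul_mul_char_le {q q0 : ℕ} [NeZero q]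
    (χ : DirichletCharacter ℂ q) (hχ : χ ≠ 1) (hq0 : 0 < q0) (hcop : q0.Coprime q) {m : ℕ}
    (hm : m ≠ 0) {X : ℕ} {x : ℝ} (hXx : (X : ℝ) ≤ x) (b : ZMod q0) :
    ‖∑ n ∈ (Icc 1 X).filter (fun n : ℕ => ((n : ℤ) : ZMod q0) = b) with n.Coprime m,
        (sqfreeFmul n : ℂ) * χ n‖ ≤
      m.divisors.card * √(q * x) * ∑ e ∈ Icc 1 X, |sqfreeFmulMoebius e| / √e := by
  rw [sum_coprime_sqfreeFmul_mul_eq hm _ (filter_subset _ _)]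
  calc _ ≤ ∑ t ∈ m.divisors, ∑ e ∈ Icc 1 X, |sqfreeFmulMoebius e| * √(q * x / e) := by
        refine (norm_sum_le _ _).trans (sum_le_sum fun t ht => (norm_sum_le _ _).trans
          (sum_le_sum fun e he => ?_))
        have hμ : ‖(μ t : ℂ)‖ ≤ 1 := by
          rw [Complex.norm_intCast]
          exact_mod_cast abs_moebius_le_one
        have hW := norm_sum_filter_dvd_dvd_le χ hq0 hcop hχ (Nat.pos_of_mem_divisors ht).ne'
          (Nat.one_le_iff_ne_zero.mp (mem_Icc.mp he).1) hXx b
        rw [norm_mul, norm_mul, Complex.norm_real, Real.norm_eq_abs]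
        calc _ ≤ 1 * |sqfreeFmulMoebius e| * √(q * x / e) := by gcongr
          _ = _ := by rw [one_mul]
    _ = _ := by
        rw [sum_const, nsmul_eq_mul, mul_assoc]
        congr 1
        rw [mul_sum]
        refine sum_congr rfl fun e _ => ?_
        rw [Real.sqrt_div' _ (Nat.cast_nonneg e)]
        ring

lemma one_add_log_floor_le {x : ℝ} (hx : 2 ≤ x) : 1 + Real.log ⌊x⌋₊ ≤ 3 * Real.log x := by
  have hfloor : Real.log ⌊x⌋₊ ≤ Real.log x :=
    Real.log_le_log (by exact_mod_cast Nat.floor_pos.mpr (by linarith)) (Nat.floor_le (by linarith))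
  have hlog2 : Real.log 2 ≤ Real.log x := Real.log_le_log (by norm_num) hx
  linarith [Real.log_two_gt_d9]

lemma one_le_log_of_three_le {y : ℝ} (hy : 3 ≤ y) : 1 ≤ Real.log y := by
  rw [Real.le_log_iff_exp_le (by linarith)]
  linarith [Real.exp_one_lt_d9]

lemma sqrt_mul_mul_one_add_log_floor_le {q0 q1 : ℕ} (hq0 : 0 < q0) (hq1 : 3 ≤ q1) {x : ℝ}
    (hx : 2 ≤ x) :
    √(q1 * x) * (1 + Real.log ⌊x⌋₊) ≤
      3 * √(q0 * q1 : ℕ) * √x * Real.log x * Real.log (q0 * q1 : ℕ) := by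
  have hq : q1 ≤ q0 * q1 := Nat.le_mul_of_pos_left q1 hq0
  have hsqrt : √(q1 * x) ≤ √(q0 * q1 : ℕ) * √x := by
    rw [← Real.sqrt_mul (Nat.cast_nonneg _)]
    gcongr
  have hlogx : 0 ≤ Real.log x := Real.log_nonneg (by linarith)
  calc √(q1 * x) * (1 + Real.log ⌊x⌋₊) ≤ √(q0 * q1 : ℕ) * √x * (3 * Real.log x) * 1 := by
        rw [mul_one]
        exact mul_le_mul hsqrt (one_add_log_floor_le hx) (by positivity) (by positivity)
    _ ≤ √(q0 * q1 : ℕ) * √x * (3 * Real.log x) * Real.log (q0 * q1 : ℕ) := by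
        gcongr
        exact one_le_log_of_three_le (by exact_mod_cast hq1.trans hq)
    _ = _ := by ring

theorem character_sum_in_residue_class_nonprincipal :
    ∃ C : ℝ, 0 < C ∧
      ∀ (q0 q1 : ℕ), 0 < q0 → 3 ≤ q1 → Nat.Coprime q0 q1 →
        ∀ (χ : DirichletCharacter ℂ q1), χ ≠ 1 →
        ∀ (a : ℤ), Int.gcd a (q0 : ℤ) = 1 →
        ∀ (m : ℕ), 0 < m → Nat.Coprime m (q0 * q1) →
        ∀ (x : ℝ), 2 ≤ x →
        ‖∑ n ∈ (Finset.Icc 1 ⌊x⌋₊).filter fun n =>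
              Nat.Coprime n m ∧ ((n : ℤ) : ZMod q0) = ((a : ZMod q0)),
            ((ArithmeticFunction.moebius n : ℤ) : ℂ) ^ 2 * χ (n : ZMod q1) * (fmul n : ℂ)‖ ≤
          C * (m.divisors.card : ℝ) * Real.sqrt ((q0 * q1 : ℕ) : ℝ) * Real.sqrt x *
            Real.log x * Real.log ((q0 * q1 : ℕ) : ℝ) := by
  set K := ∑' r : ℕ, 1 / ((r : ℝ) * √r)
  have hK : 1 ≤ K := by simpa [K] using summable_one_div_mul_sqrt.le_tsum 1 fun _ _ => by positivity
  refine ⟨3 * K, by positivity, ?_⟩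
  intro q0 q1 hq0 hq1 hcop χ hχ a _ m hm _ x hx
  have : NeZero q1 := ⟨by omega⟩
  have hsum : ∑ n ∈ (Icc 1 ⌊x⌋₊).filter fun n : ℕ =>
        n.Coprime m ∧ ((n : ℤ) : ZMod q0) = (a : ZMod q0),
          ((μ n : ℤ) : ℂ) ^ 2 * χ n * (fmul n : ℂ) =
      ∑ n ∈ (Icc 1 ⌊x⌋₊).filter (fun n : ℕ => ((n : ℤ) : ZMod q0) = a) with n.Coprime m,
        (sqfreeFmul n : ℂ) * χ n := by
    rw [filter_filter]
    refine sum_congr (filter_congr fun _ _ => and_comm) fun n _ => ?_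
    rw [sqfreeFmul_apply]
    push_cast
    ring
  rw [hsum]
  calc _ ≤ m.divisors.card * √(q1 * x) * ∑ e ∈ Icc 1 ⌊x⌋₊, |sqfreeFmulMoebius e| / √e :=
        norm_sum_coprime_sqfreeFmul_mul_char_le χ hχ hq0 hcop hm.ne' (Nat.floor_le (by linarith)) _
    _ ≤ m.divisors.card * √(q1 * x) * (K * (1 + Real.log ⌊x⌋₊)) := by
        gcongr
        exact sum_abs_sqfreeFmulMoebius_div_sqrt_le _
    _ = K * m.divisors.card * (√(q1 * x) * (1 + Real.log ⌊x⌋₊)) := by ring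
    _ ≤ K * m.divisors.card * (3 * √(q0 * q1 : ℕ) * √x * Real.log x * Real.log (q0 * q1 : ℕ)) :=
        mul_le_mul_of_nonneg_left (sqrt_mul_mul_one_add_log_floor_le hq0 hq1 hx) (by positivity)
    _ = _ := by ring
end

section
/- Let m1, m2, m3 be nonzero integers with m1 > 0 and |m1·m2·m3| squarefree, and let p be an odd prime dividing m3. Then (m1, m2, m3) is ℚ_p-soluble, where ℚ_p is the field of p-adic numbers, if and only if the Legendre symbol (m1·m2 / p) equals 1. -/
/-- The conic `x² = m₁m₂ y² + m₁m₃ z²` has a nontrivial solution over `F`. -/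
def Soluble (F : Type*) [Field F] (m1 m2 m3 : ℤ) : Prop :=
  ∃ x y z : F, ¬(x = 0 ∧ y = 0 ∧ z = 0) ∧
    x ^ 2 = ((m1 * m2 : ℤ) : F) * y ^ 2 + ((m1 * m3 : ℤ) : F) * z ^ 2

/-!
Write `m₃ = p c`. Since `m₁m₂m₃` is squarefree, `m₁m₂` and `m₁c` are `p`-adic units, so the conic
is `x² = A y² + p b z²` with `A, b` units of `ℤ_p`. Scale a nontrivial solution to a primitive one
in `ℤ_p`. If `p ∣ y` then `p ∣ x`, hence `p² ∣ p b z²` and `p ∣ z`, contradicting primitivity; so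
`y` is a unit, and reducing mod `p` shows that `A` is a square mod `p`. Conversely, a square root
of `A` mod `p` is a simple root of `X² - A` mod `p` (as `p` is odd), so it lifts to `ℤ_p` by
Hensel's lemma, giving the solution `(√A, 1, 0)`.
-/

open Polynomial

theorem Prime.dvd_and_dvd_of_sq_eq_add_mul_sq {R : Type*} [CommRing R] [IsDomain R]
    {π A b X Y Z : R} (hπ : Prime π) (hb : ¬π ∣ b) (h : X ^ 2 = A * Y ^ 2 + π * b * Z ^ 2)
    (hY : π ∣ Y) : π ∣ X ∧ π ∣ Z := by
  have hX : π ∣ X := by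
    refine hπ.dvd_of_dvd_pow (n := 2) ?_
    rw [h]
    exact dvd_add (dvd_mul_of_dvd_right (dvd_pow hY two_ne_zero) _)
      (dvd_mul_of_dvd_left (dvd_mul_right _ _) _)
  have hbZ : π * π ∣ π * (b * Z ^ 2) := by
    have : π * (b * Z ^ 2) = X ^ 2 - A * Y ^ 2 := by rw [h]; ring
    rw [this, ← sq]
    exact dvd_sub (pow_dvd_pow_of_dvd hX 2) (dvd_mul_of_dvd_right (pow_dvd_pow_of_dvd hY 2) _)
  rw [mul_dvd_mul_iff_left hπ.ne_zero] at hbZ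
  exact ⟨hX, hπ.dvd_of_dvd_pow ((hπ.dvd_mul.mp hbZ).resolve_left hb)⟩

namespace PadicInt

variable {p : ℕ} [Fact p.Prime]

theorem toZMod_eq_zero_iff_norm_lt_one (z : ℤ_[p]) : toZMod z = 0 ↔ ‖z‖ < 1 := by
  rw [← RingHom.mem_ker, ker_toZMod, IsLocalRing.mem_maximalIdeal, mem_nonunits]

theorem toZMod_eq_zero_iff_dvd (z : ℤ_[p]) : toZMod z = 0 ↔ (p : ℤ_[p]) ∣ z := by
  rw [toZMod_eq_zero_iff_norm_lt_one, norm_lt_one_iff_dvd]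

theorem norm_eq_one_of_toZMod_ne_zero {z : ℤ_[p]} (hz : toZMod z ≠ 0) : ‖z‖ = 1 :=
  (norm_le_one z).antisymm (not_lt.mp (mt (toZMod_eq_zero_iff_norm_lt_one z).mpr hz))

theorem isSquare_of_isSquare_toZMod (hp : p ≠ 2) {a : ℤ_[p]} (ha : toZMod a ≠ 0)
    (hsq : IsSquare (toZMod a)) : IsSquare a := by
  obtain ⟨r, hr⟩ := hsq
  obtain ⟨t, rfl⟩ : ∃ t : ℤ_[p], toZMod t = r := ⟨r.val, by simp⟩
  have hroot : ‖(X ^ 2 - C a).aeval t‖ < 1 := by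
    rw [← toZMod_eq_zero_iff_norm_lt_one]
    simp [hr, sq]
  have hderiv : ‖(derivative (X ^ 2 - C a)).aeval t‖ = 1 := by
    have h2 : (2 : ZMod p) ≠ 0 := Ring.two_ne_zero (by rwa [ZMod.ringChar_zmod_n])
    have ht : toZMod t ≠ 0 := fun ht => ha (by rw [hr, ht, zero_mul])
    have heval : (derivative (X ^ 2 - C a)).aeval t = 2 * t := by simp [one_add_one_eq_two]
    refine norm_eq_one_of_toZMod_ne_zero ?_
    rw [heval, map_mul, map_ofNat]
    exact mul_ne_zero h2 ht
  obtain ⟨s, hs, -⟩ := hensels_lemma (F := X ^ 2 - C a) (a := t) (by rwa [hderiv, one_pow])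
  exact ⟨s, by simpa [sub_eq_zero, sq, eq_comm] using hs⟩

theorem isSquare_toZMod_of_sq_eq_add_p_mul_sq {A b X Y Z : ℤ_[p]} (hb : toZMod b ≠ 0)
    (hprim : X = 1 ∨ Y = 1 ∨ Z = 1) (h : X ^ 2 = A * Y ^ 2 + p * b * Z ^ 2) :
    IsSquare (toZMod A) := by
  have hπ : Prime (p : ℤ_[p]) := prime_p
  have hY : toZMod Y ≠ 0 := by
    rw [Ne, toZMod_eq_zero_iff_dvd]
    intro hY
    obtain ⟨hX, hZ⟩ :=
      hπ.dvd_and_dvd_of_sq_eq_add_mul_sq (mt (toZMod_eq_zero_iff_dvd b).mpr hb) h hY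
    apply hπ.not_isUnit
    rcases hprim with rfl | rfl | rfl <;> exact isUnit_of_dvd_one ‹_›
  have hmod := congrArg toZMod h
  simp only [map_add, map_mul, map_pow, map_natCast, CharP.cast_eq_zero, zero_mul,
    add_zero] at hmod
  refine ⟨toZMod X / toZMod Y, ?_⟩
  rw [div_mul_div_comm, ← sq, ← sq, hmod, mul_div_cancel_right₀ _ (pow_ne_zero 2 hY)]

end PadicInt

namespace Padic

variable {p : ℕ} [Fact p.Prime]

theorem exists_eq_mul_padicInt_of_ne_zero {x y z : ℚ_[p]} (h : ¬(x = 0 ∧ y = 0 ∧ z = 0)) :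
    ∃ (c : ℚ_[p]) (X Y Z : ℤ_[p]), c ≠ 0 ∧ (X = 1 ∨ Y = 1 ∨ Z = 1) ∧
      x = c * X ∧ y = c * Y ∧ z = c * Z := by
  classical
  obtain ⟨w, hw, hmax⟩ := Finset.exists_max_image ({x, y, z} : Finset ℚ_[p]) (‖·‖) (by simp)
  have hw0 : w ≠ 0 := by
    rintro rfl
    simp only [Finset.mem_insert, Finset.mem_singleton, forall_eq_or_imp, forall_eq, norm_zero,
      norm_le_zero_iff] at hmax
    exact h hmax
  have hle (v : ℚ_[p]) (hv : v ∈ ({x, y, z} : Finset ℚ_[p])) : ‖v / w‖ ≤ 1 := by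
    rw [norm_div]; exact div_le_one_of_le₀ (hmax v hv) (norm_nonneg _)
  refine ⟨w, ⟨x / w, hle x (by simp)⟩, ⟨y / w, hle y (by simp)⟩, ⟨z / w, hle z (by simp)⟩,
    hw0, ?_, ?_⟩
  · simp only [Finset.mem_insert, Finset.mem_singleton] at hw
    rcases hw with rfl | rfl | rfl
    · exact Or.inl (Subtype.ext (div_self hw0))
    · exact Or.inr (Or.inl (Subtype.ext (div_self hw0)))
    · exact Or.inr (Or.inr (Subtype.ext (div_self hw0)))
  · simp [mul_div_cancel₀ _ hw0]

theorem exists_sq_eq_add_p_mul_sq_iff_isSquare (hp : p ≠ 2) {A b : ℤ_[p]}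
    (hA : PadicInt.toZMod A ≠ 0) (hb : PadicInt.toZMod b ≠ 0) :
    (∃ x y z : ℚ_[p], ¬(x = 0 ∧ y = 0 ∧ z = 0) ∧ x ^ 2 = A * y ^ 2 + p * b * z ^ 2) ↔
      IsSquare (PadicInt.toZMod A) := by
  constructor
  · rintro ⟨x, y, z, hne, h⟩
    obtain ⟨c, X, Y, Z, hc, hprim, rfl, rfl, rfl⟩ := exists_eq_mul_padicInt_of_ne_zero hne
    refine PadicInt.isSquare_toZMod_of_sq_eq_add_p_mul_sq hb hprim (Subtype.ext ?_)
    apply mul_left_cancel₀ (pow_ne_zero 2 hc)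
    push_cast
    linear_combination h
  · intro hsq
    obtain ⟨s, hs⟩ := PadicInt.isSquare_of_isSquare_toZMod hp hA hsq
    refine ⟨s, 1, 0, by simp, ?_⟩
    rw [hs]
    push_cast
    ring

end Padic

theorem conic_local_solubility_p_dvd_m3_general (m1 m2 m3 : ℤ) (hsq : Squarefree (m1 * m2 * m3))
    (p : ℕ) [Fact p.Prime] (hodd : p ≠ 2) (hdvd : (p : ℤ) ∣ m3) :
    Soluble ℚ_[p] m1 m2 m3 ↔ jacobiSym (m1 * m2) p = 1 := by
  have hp : ¬IsUnit (p : ℤ) := (Nat.prime_iff_prime_int.mp Fact.out).not_isUnit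
  obtain ⟨c, rfl⟩ := hdvd
  have hA : ((m1 * m2 : ℤ) : ZMod p) ≠ 0 := by
    rw [Ne, ZMod.intCast_zmod_eq_zero_iff_dvd]
    exact fun h => hp (hsq _ (mul_dvd_mul h (dvd_mul_right _ _)))
  have hb : ((m1 * c : ℤ) : ZMod p) ≠ 0 := by
    rw [Ne, ZMod.intCast_zmod_eq_zero_iff_dvd]
    exact fun h => hp (hsq _ ((mul_dvd_mul (dvd_mul_right _ m2) h).trans (dvd_of_eq (by ring))))
  have hsol := Padic.exists_sq_eq_add_p_mul_sq_iff_isSquare hodd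
    (A := ((m1 * m2 : ℤ) : ℤ_[p])) (b := ((m1 * c : ℤ) : ℤ_[p]))
    (by rwa [map_intCast]) (by rwa [map_intCast])
  rw [map_intCast] at hsol
  rw [← jacobiSym.legendreSym.to_jacobiSym, legendreSym.eq_one_iff p hA, ← hsol, Soluble]
  push_cast
  simp only [mul_assoc, mul_left_comm]

theorem conic_local_solubility_p_dvd_m3 (m1 m2 m3 : ℤ) (h1 : m1 ≠ 0) (h2 : m2 ≠ 0)
    (h3 : m3 ≠ 0) (hpos : 0 < m1) (hsq : Squarefree (m1 * m2 * m3))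
    (p : ℕ) [Fact p.Prime] (hodd : p ≠ 2) (hdvd : (p : ℤ) ∣ m3) :
    Soluble ℚ_[p] m1 m2 m3 ↔ jacobiSym (m1 * m2) p = 1 :=
  conic_local_solubility_p_dvd_m3_general m1 m2 m3 hsq p hodd hdvd
end

section
/- Let a1, a2, a3 be positive odd integers, let δ2, δ3 ∈ {1, −1} with (δ2, δ3) ≠ (−1, −1), and let μ, α, β ∈ {0, 1} with μ + α + β ≤ 1. Set m1 = 2^μ·a1, m2 = δ2·2^α·a2, m3 = δ3·2^β·a3, and define u = (−1)^{η(a1)·η(a2) + η(a1)·η(a3) + η(a2)·η(a3)} · J(−1 | a1) · J(2^μ | a2·a3) · J(δ2·2^α | a1·a3) · J(δ3·2^β | a1·a2). Then u = 1 if and only if (m1, m2, m3) is ℚ₂-soluble, where ℚ₂ is the field of 2-adic numbers. -/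
/-- `η(b) ∈ {0,1}` with `η(b) ≡ (b-1)/2 (mod 2)`, for a (positive) odd integer `b`. -/
def eta (b : ℕ) : ℕ := ((b - 1) / 2) % 2

/-!
Write `A = m₁m₂ = 2^E c` and `B = m₁m₃ = 2^F d` with `c, d` odd. The conic `x² = A y² + B z²`
is soluble over `ℚ₂` exactly when the Hilbert symbol `(A, B)₂` is `1`. Since odd integers
`≡ 1 (mod 8)` are `2`-adic squares by Hensel's lemma, solubility depends only on `E`, `F` and on
`c, d mod 8`, and each of these finitely many cases is settled by a small solution or by the
absence of primitive solutions modulo `16`. The Jacobi symbols at `-1` and `2` are `(-1)^η` and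
`χ₈`, so `u` is a function of the residues mod `8` as well, and a finite check shows that it
equals `(A, B)₂`.
-/

section Conic

variable {F : Type*} [Field F]

def ConicSoluble (a b : F) : Prop :=
  ∃ x y z : F, ¬(x = 0 ∧ y = 0 ∧ z = 0) ∧ x ^ 2 = a * y ^ 2 + b * z ^ 2

theorem soluble_iff_conicSoluble (m1 m2 m3 : ℤ) :
    Soluble F m1 m2 m3 ↔ ConicSoluble ((m1 * m2 : ℤ) : F) ((m1 * m3 : ℤ) : F) :=
  Iff.rfl

theorem ConicSoluble.of_isSquare {a b y z : F} (h : IsSquare (a * y ^ 2 + b * z ^ 2))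
    (h0 : a * y ^ 2 + b * z ^ 2 ≠ 0) : ConicSoluble a b := by
  obtain ⟨x, hx⟩ := h
  exact ⟨x, y, z, fun hx0 => h0 (by simp [hx, hx0.1]), by rw [hx, sq]⟩

theorem ConicSoluble.mul_sq {a b s t : F} (h : ConicSoluble a b) (hs : s ≠ 0) (ht : t ≠ 0) :
    ConicSoluble (a * s ^ 2) (b * t ^ 2) := by
  obtain ⟨x, y, z, hxyz, hx⟩ := h
  refine ⟨x, y / s, z / t, by simpa [hs, ht] using hxyz, ?_⟩
  rw [hx]
  field_simp

theorem conicSoluble_mul_sq_iff {a b s t : F} (hs : s ≠ 0) (ht : t ≠ 0) :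
    ConicSoluble (a * s ^ 2) (b * t ^ 2) ↔ ConicSoluble a b := by
  refine ⟨fun h => ?_, fun h => h.mul_sq hs ht⟩
  simpa [hs, ht] using h.mul_sq (inv_ne_zero hs) (inv_ne_zero ht)

theorem conicSoluble_congr {a b a' b' : F} (ha : IsSquare (a * a')) (hb : IsSquare (b * b'))
    (ha0 : a * a' ≠ 0) (hb0 : b * b' ≠ 0) : ConicSoluble a b ↔ ConicSoluble a' b' := by
  obtain ⟨r, hr⟩ := ha
  obtain ⟨s, hs⟩ := hb
  have hr0 : r ≠ 0 := by rintro rfl; simp_all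
  have hs0 : s ≠ 0 := by rintro rfl; simp_all
  have ha' : a' ≠ 0 := right_ne_zero_of_mul ha0
  have hb' : b' ≠ 0 := right_ne_zero_of_mul hb0
  have hr' : a = a' * (r / a') ^ 2 := by field_simp; linear_combination hr
  have hs' : b = b' * (s / b') ^ 2 := by field_simp; linear_combination hs
  rw [hr', hs', conicSoluble_mul_sq_iff (div_ne_zero hr0 ha') (div_ne_zero hs0 hb')]

end Conic

section Padic

variable {p : ℕ} [Fact p.Prime]

theorem Padic.exists_isUnit_mul_eq {x y z : ℚ_[p]} (h : ¬(x = 0 ∧ y = 0 ∧ z = 0)) :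
    ∃ q : ℚ_[p], q ≠ 0 ∧ ∃ X Y Z : ℤ_[p], (IsUnit X ∨ IsUnit Y ∨ IsUnit Z) ∧
      X * q = x ∧ Y * q = y ∧ Z * q = z := by
  set m := max ‖x‖ (max ‖y‖ ‖z‖)
  have hmax : ‖x‖ = m ∨ ‖y‖ = m ∨ ‖z‖ = m := by
    rcases max_choice ‖x‖ (max ‖y‖ ‖z‖) with hm | hm
    · exact Or.inl hm.symm
    · exact Or.inr ((max_choice ‖y‖ ‖z‖).imp (fun h => (hm.trans h).symm)
        fun h => (hm.trans h).symm)
  obtain ⟨q, hqm⟩ : ∃ q : ℚ_[p], ‖q‖ = m := by rcases hmax with h | h | h <;> exact ⟨_, h⟩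
  have hq0 : q ≠ 0 := by
    rintro rfl
    refine h ⟨?_, ?_, ?_⟩ <;> rw [← norm_le_zero_iff, ← norm_zero (E := ℚ_[p]), hqm] <;> simp [m]
  have lift (w : ℚ_[p]) (hw : ‖w‖ ≤ m) : ∃ W : ℤ_[p], (‖w‖ = m → IsUnit W) ∧ W * q = w :=
    ⟨⟨w / q, by rwa [norm_div, div_le_one (norm_pos_iff.2 hq0), hqm]⟩,
      fun hwm => PadicInt.isUnit_iff.2 <| by
        change ‖w / q‖ = 1; rw [norm_div, hwm, hqm, div_self (hqm ▸ norm_ne_zero_iff.2 hq0)],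
      div_mul_cancel₀ _ hq0⟩
  obtain ⟨X, hX, rfl⟩ := lift x (by simp [m])
  obtain ⟨Y, hY, rfl⟩ := lift y (by simp [m])
  obtain ⟨Z, hZ, rfl⟩ := lift z (by simp [m])
  exact ⟨q, hq0, X, Y, Z, hmax.imp hX (Or.imp hY hZ), rfl, rfl, rfl⟩

theorem Padic.not_conicSoluble_of_forall_zmod {A B : ℤ} (n : ℕ)
    (h : ∀ x y z : ZMod (p ^ n), IsUnit x ∨ IsUnit y ∨ IsUnit z →
      x ^ 2 ≠ (A : ZMod (p ^ n)) * y ^ 2 + (B : ZMod (p ^ n)) * z ^ 2) :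
    ¬ConicSoluble (A : ℚ_[p]) (B : ℚ_[p]) := by
  rintro ⟨x, y, z, hxyz, he⟩
  obtain ⟨q, hq, X, Y, Z, hunit, rfl, rfl, rfl⟩ := Padic.exists_isUnit_mul_eq hxyz
  have hint : X ^ 2 = A * Y ^ 2 + B * Z ^ 2 := by
    apply PadicInt.ext
    apply mul_right_cancel₀ (pow_ne_zero 2 hq)
    push_cast
    linear_combination he
  refine h _ _ _ ?_ (by simpa using congrArg (PadicInt.toZModPow n) hint)
  exact hunit.imp (IsUnit.map _) (Or.imp (IsUnit.map _) (IsUnit.map _))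

end Padic

open Polynomial in
theorem PadicInt.isSquare_intCast_of_emod_eight_eq_one {n : ℤ} (h : n % 8 = 1) :
    IsSquare (n : ℤ_[2]) := by
  have hnorm : ‖(X ^ 2 - C n : ℤ[X]).aeval (1 : ℤ_[2])‖ <
      ‖(X ^ 2 - C n : ℤ[X]).derivative.aeval (1 : ℤ_[2])‖ ^ 2 := by
    have h8 : ‖((1 - n : ℤ) : ℤ_[2])‖ ≤ (2 : ℝ) ^ (-3 : ℤ) :=
      PadicInt.norm_int_le_pow_iff_dvd.2 (by norm_num; omega)
    have h2 : ‖(2 : ℤ_[2])‖ = 2⁻¹ := by simpa using PadicInt.norm_p (p := 2)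
    push_cast at h8
    norm_num [h2, map_ofNat] at h8 ⊢
    linarith
  obtain ⟨z, hz, -⟩ := hensels_lemma hnorm
  exact ⟨z, by simpa [sub_eq_zero, sq, eq_comm] using hz⟩

theorem Padic.isSquare_four_pow_mul (k : ℕ) {m : ℤ} (hm : m % 8 = 1) :
    IsSquare ((4 ^ k * m : ℤ) : ℚ_[2]) := by
  obtain ⟨r, hr⟩ := PadicInt.isSquare_intCast_of_emod_eight_eq_one hm
  refine ⟨2 ^ k * r, ?_⟩
  have hr' : (m : ℚ_[2]) = r * r := by exact_mod_cast congrArg ((↑) : ℤ_[2] → ℚ_[2]) hr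
  push_cast
  rw [hr', show (4 : ℚ_[2]) = 2 ^ 2 by norm_num, ← pow_mul]
  ring

theorem Int.mul_val_emod_eight {c : ℤ} (hc : Odd c) : c * (c : ZMod 8).val % 8 = 1 := by
  rw [ZMod.val_intCast, Int.mul_emod, Int.emod_emod_of_dvd _ (by norm_num)]
  have : c % 8 = 1 ∨ c % 8 = 3 ∨ c % 8 = 5 ∨ c % 8 = 7 := by
    obtain ⟨k, rfl⟩ := hc; omega
  rcases this with h | h | h | h <;> rw [h] <;> norm_num

theorem ZMod.val_intCast_eight_mod_two {c : ℤ} (hc : Odd c) : (c : ZMod 8).val % 2 = 1 := by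
  have := ZMod.val_intCast (n := 8) c
  obtain ⟨k, rfl⟩ := hc
  omega

theorem conicSoluble_two_pow_mul_iff_val {E F : ℕ} {c d : ℤ} (hc : Odd c) (hd : Odd d) :
    ConicSoluble ((2 ^ E * c : ℤ) : ℚ_[2]) ((2 ^ F * d : ℤ) : ℚ_[2]) ↔
      ConicSoluble ((2 ^ E * (c : ZMod 8).val : ℤ) : ℚ_[2])
        ((2 ^ F * (d : ZMod 8).val : ℤ) : ℚ_[2]) := by
  have same_class (k : ℕ) {c : ℤ} (hc : Odd c) :
      IsSquare (((2 ^ k * c : ℤ) : ℚ_[2]) * ((2 ^ k * (c : ZMod 8).val : ℤ) : ℚ_[2])) ∧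
        ((2 ^ k * c : ℤ) : ℚ_[2]) * ((2 ^ k * (c : ZMod 8).val : ℤ) : ℚ_[2]) ≠ 0 := by
    have h8 := Int.mul_val_emod_eight hc
    rw [show ((2 ^ k * c : ℤ) : ℚ_[2]) * ((2 ^ k * (c : ZMod 8).val : ℤ) : ℚ_[2]) =
        ((4 ^ k * (c * (c : ZMod 8).val) : ℤ) : ℚ_[2]) by
      push_cast; rw [show (4 : ℚ_[2]) = 2 ^ 2 by norm_num, ← pow_mul]; ring]
    exact ⟨Padic.isSquare_four_pow_mul k h8,
      Int.cast_ne_zero.2 (mul_ne_zero (pow_ne_zero _ four_ne_zero) (by omega))⟩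
  exact conicSoluble_congr (same_class E hc).1 (same_class F hd).1 (same_class E hc).2
    (same_class F hd).2

/-- `(2^E c, 2^F d)₂ = (-1)^(ε(c)ε(d) + E ω(d) + F ω(c))` for odd `c, d`, where `ε = η` and
`χ₈ = (-1)^ω`. -/
def hilbertSymbolTwo (E F : ℕ) (c d : ZMod 8) : ℤ :=
  (-1) ^ (eta c.val * eta d.val) * ZMod.χ₈ d ^ E * ZMod.χ₈ c ^ F

def SmallSquareCertificate (A B : ℤ) : Prop :=
  ∃ y z : Fin 4, ∃ k : Fin 3,
    4 ^ (k : ℕ) ∣ A * y ^ 2 + B * z ^ 2 ∧ (A * y ^ 2 + B * z ^ 2) / 4 ^ (k : ℕ) % 8 = 1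

/-- Modulo `8` would not do: `x² = 2y² + 6z²` is insoluble over `ℚ₂` but has the primitive
solution `(0, 1, 1)` modulo `8`. -/
def NoPrimitiveSolutionModSixteen (A B : ℤ) : Prop :=
  ∀ x y z : ZMod (2 ^ 4), IsUnit x ∨ IsUnit y ∨ IsUnit z →
    x ^ 2 ≠ (A : ZMod (2 ^ 4)) * y ^ 2 + (B : ZMod (2 ^ 4)) * z ^ 2

instance (A B : ℤ) : Decidable (SmallSquareCertificate A B) := by
  unfold SmallSquareCertificate; infer_instance

instance (A B : ℤ) : Decidable (NoPrimitiveSolutionModSixteen A B) := by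
  unfold NoPrimitiveSolutionModSixteen; infer_instance

theorem SmallSquareCertificate.conicSoluble {A B : ℤ} (h : SmallSquareCertificate A B) :
    ConicSoluble (A : ℚ_[2]) (B : ℚ_[2]) := by
  obtain ⟨y, z, k, ⟨m, hm⟩, hm8⟩ := h
  rw [hm, Int.mul_ediv_cancel_left _ (pow_ne_zero _ four_ne_zero)] at hm8
  have hval : (A : ℚ_[2]) * (y : ℚ_[2]) ^ 2 + B * (z : ℚ_[2]) ^ 2 =
      ((4 ^ (k : ℕ) * m : ℤ) : ℚ_[2]) := by
    rw [← hm]; push_cast; ring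
  refine ConicSoluble.of_isSquare (hval ▸ Padic.isSquare_four_pow_mul k hm8) ?_
  rw [hval]
  exact Int.cast_ne_zero.2 (mul_ne_zero (pow_ne_zero _ four_ne_zero) (by omega))

theorem conicSoluble_two_pow_mul_val_iff_hilbertSymbolTwo {E F : ℕ} (hE : E ≤ 1) (hF : F ≤ 1)
    {c d : ZMod 8} (hc : c.val % 2 = 1) (hd : d.val % 2 = 1) :
    ConicSoluble ((2 ^ E * c.val : ℤ) : ℚ_[2]) ((2 ^ F * d.val : ℤ) : ℚ_[2]) ↔
      hilbertSymbolTwo E F c d = 1 := by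
  have table : ∀ E < 2, ∀ F < 2, ∀ c d : ZMod 8, c.val % 2 = 1 → d.val % 2 = 1 →
      (hilbertSymbolTwo E F c d = 1 → SmallSquareCertificate (2 ^ E * c.val) (2 ^ F * d.val)) ∧
      (hilbertSymbolTwo E F c d ≠ 1 →
        NoPrimitiveSolutionModSixteen (2 ^ E * c.val) (2 ^ F * d.val)) := by
    set_option synthInstance.maxSize 2048 in decide +kernel
  obtain ⟨hsol, hinsol⟩ := table E (by omega) F (by omega) c d hc hd
  by_cases h : hilbertSymbolTwo E F c d = 1
  · exact iff_of_true (hsol h).conicSoluble h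
  · exact iff_of_false (Padic.not_conicSoluble_of_forall_zmod 4 (hinsol h)) h

theorem conicSoluble_iff_hilbertSymbolTwo {E F : ℕ} (hE : E ≤ 1) (hF : F ≤ 1) {c d : ℤ}
    (hc : Odd c) (hd : Odd d) :
    ConicSoluble ((2 ^ E * c : ℤ) : ℚ_[2]) ((2 ^ F * d : ℤ) : ℚ_[2]) ↔
      hilbertSymbolTwo E F c d = 1 := by
  rw [conicSoluble_two_pow_mul_iff_val hc hd,
    conicSoluble_two_pow_mul_val_iff_hilbertSymbolTwo hE hF (ZMod.val_intCast_eight_mod_two hc)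
      (ZMod.val_intCast_eight_mod_two hd)]

theorem eta_eq_eta_val {b : ℕ} (hb : Odd b) : eta b = eta (b : ZMod 8).val := by
  obtain ⟨k, rfl⟩ := hb
  rw [ZMod.val_natCast, eta, eta]
  omega

theorem jacobiSym_neg_one_eq_neg_one_pow_eta {b : ℕ} (hb : Odd b) :
    jacobiSym (-1) b = (-1) ^ eta b := by
  rw [jacobiSym.at_neg_one hb, ZMod.χ₄_eq_neg_one_pow (Nat.odd_iff.1 hb), eta,
    neg_one_pow_eq_pow_mod_two]
  obtain ⟨k, rfl⟩ := hb
  congr 2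
  omega

theorem jacobiSym_neg_one_pow_mul_two_pow {b : ℕ} (hb : Odd b) (s t : ℕ) :
    jacobiSym ((-1) ^ s * 2 ^ t) b = ((-1) ^ eta b) ^ s * ZMod.χ₈ b ^ t := by
  rw [jacobiSym.mul_left, jacobiSym.pow_left, jacobiSym.pow_left,
    jacobiSym_neg_one_eq_neg_one_pow_eta hb, jacobiSym.at_two hb]

theorem u_residue_eq_hilbertSymbolTwo :
    ∀ s2 < 2, ∀ s3 < 2, s2 + s3 ≤ 1 → ∀ μ < 2, ∀ α < 2, ∀ β < 2, μ + α + β ≤ 1 →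
    ∀ r1 r2 r3 : ZMod 8, r1.val % 2 = 1 → r2.val % 2 = 1 → r3.val % 2 = 1 →
      (-1) ^ (eta r1.val * eta r2.val + eta r1.val * eta r3.val + eta r2.val * eta r3.val) *
        (-1) ^ eta r1.val * ZMod.χ₈ (r2 * r3) ^ μ *
        (((-1) ^ eta (r1 * r3).val) ^ s2 * ZMod.χ₈ (r1 * r3) ^ α) *
        (((-1) ^ eta (r1 * r2).val) ^ s3 * ZMod.χ₈ (r1 * r2) ^ β) =
      hilbertSymbolTwo (μ + α) (μ + β) ((-1) ^ s2 * r1 * r2) ((-1) ^ s3 * r1 * r3) := by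
  set_option synthInstance.maxSize 8192 in decide +kernel

theorem u_eq_hilbertSymbolTwo {a1 a2 a3 : ℕ} (h1 : Odd a1) (h2 : Odd a2) (h3 : Odd a3)
    {s2 s3 μ α β : ℕ} (hs : s2 + s3 ≤ 1) (hsum : μ + α + β ≤ 1) :
    (-1 : ℤ) ^ (eta a1 * eta a2 + eta a1 * eta a3 + eta a2 * eta a3) * jacobiSym (-1) a1 *
        jacobiSym (2 ^ μ) (a2 * a3) * jacobiSym ((-1) ^ s2 * 2 ^ α) (a1 * a3) *
        jacobiSym ((-1) ^ s3 * 2 ^ β) (a1 * a2) =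
      hilbertSymbolTwo (μ + α) (μ + β) (((-1) ^ s2 * a1 * a2 : ℤ) : ZMod 8)
        (((-1) ^ s3 * a1 * a3 : ℤ) : ZMod 8) := by
  rw [jacobiSym_neg_one_eq_neg_one_pow_eta h1, jacobiSym.pow_left, jacobiSym.at_two (h2.mul h3),
    jacobiSym_neg_one_pow_mul_two_pow (h1.mul h3), jacobiSym_neg_one_pow_mul_two_pow (h1.mul h2),
    eta_eq_eta_val h1, eta_eq_eta_val h2, eta_eq_eta_val h3, eta_eq_eta_val (h1.mul h3),
    eta_eq_eta_val (h1.mul h2)]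
  push_cast
  have odd_val {a : ℕ} (ha : Odd a) : (a : ZMod 8).val % 2 = 1 := by
    simpa using ZMod.val_intCast_eight_mod_two ((Int.odd_coe_nat a).2 ha)
  exact u_residue_eq_hilbertSymbolTwo s2 (by omega) s3 (by omega) hs μ (by omega) α (by omega)
    β (by omega) hsum _ _ _ (odd_val h1) (odd_val h2) (odd_val h3)

theorem u_factor_eq_one_iff_two_adic_solubility_general
    (a1 a2 a3 : ℕ)
    (hodd1 : Odd a1) (hodd2 : Odd a2) (hodd3 : Odd a3)
    (δ2 δ3 : ℤ) (hδ2 : δ2 = 1 ∨ δ2 = -1) (hδ3 : δ3 = 1 ∨ δ3 = -1)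
    (hδ : ¬(δ2 = -1 ∧ δ3 = -1))
    (μ α β : ℕ) (hsum : μ + α + β ≤ 1) :
    ((-1 : ℤ) ^ (eta a1 * eta a2 + eta a1 * eta a3 + eta a2 * eta a3) *
        jacobiSym (-1) a1 * jacobiSym (2 ^ μ) (a2 * a3) *
        jacobiSym (δ2 * 2 ^ α) (a1 * a3) * jacobiSym (δ3 * 2 ^ β) (a1 * a2)) = 1 ↔
      Soluble ℚ_[2] (2 ^ μ * (a1 : ℤ)) (δ2 * 2 ^ α * (a2 : ℤ)) (δ3 * 2 ^ β * (a3 : ℤ)) := by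
  have sign {δ : ℤ} (h : δ = 1 ∨ δ = -1) : ∃ s ≤ 1, (-1) ^ s = δ := by
    rcases h with rfl | rfl
    exacts [⟨0, by norm_num⟩, ⟨1, by norm_num⟩]
  obtain ⟨s2, hs2, rfl⟩ := sign hδ2
  obtain ⟨s3, hs3, rfl⟩ := sign hδ3
  have hs : s2 + s3 ≤ 1 := by
    by_contra! h
    obtain ⟨rfl, rfl⟩ : s2 = 1 ∧ s3 = 1 := by omega
    exact hδ ⟨pow_one _, pow_one _⟩
  have odd_part (s : ℕ) {b c : ℕ} (hb : Odd b) (hc : Odd c) : Odd ((-1) ^ s * b * c : ℤ) :=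
    (odd_neg_one.pow.mul (Int.odd_coe_nat _ |>.2 hb)).mul (Int.odd_coe_nat _ |>.2 hc)
  rw [soluble_iff_conicSoluble,
    show 2 ^ μ * (a1 : ℤ) * ((-1) ^ s2 * 2 ^ α * a2) = 2 ^ (μ + α) * ((-1) ^ s2 * a1 * a2) by
      ring,
    show 2 ^ μ * (a1 : ℤ) * ((-1) ^ s3 * 2 ^ β * a3) = 2 ^ (μ + β) * ((-1) ^ s3 * a1 * a3) by
      ring,
    conicSoluble_iff_hilbertSymbolTwo (by omega) (by omega) (odd_part s2 hodd1 hodd2)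
      (odd_part s3 hodd1 hodd3), u_eq_hilbertSymbolTwo hodd1 hodd2 hodd3 hs hsum]

theorem u_factor_eq_one_iff_two_adic_solubility
    (a1 a2 a3 : ℕ) (ha1 : 0 < a1) (ha2 : 0 < a2) (ha3 : 0 < a3)
    (hodd1 : Odd a1) (hodd2 : Odd a2) (hodd3 : Odd a3)
    (δ2 δ3 : ℤ) (hδ2 : δ2 = 1 ∨ δ2 = -1) (hδ3 : δ3 = 1 ∨ δ3 = -1)
    (hδ : ¬(δ2 = -1 ∧ δ3 = -1))
    (μ α β : ℕ) (hμ : μ ≤ 1) (hα : α ≤ 1) (hβ : β ≤ 1) (hsum : μ + α + β ≤ 1) :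
    ((-1 : ℤ) ^ (eta a1 * eta a2 + eta a1 * eta a3 + eta a2 * eta a3) *
        jacobiSym (-1) a1 * jacobiSym (2 ^ μ) (a2 * a3) *
        jacobiSym (δ2 * 2 ^ α) (a1 * a3) * jacobiSym (δ3 * 2 ^ β) (a1 * a2)) = 1 ↔
      Soluble ℚ_[2] (2 ^ μ * (a1 : ℤ)) (δ2 * 2 ^ α * (a2 : ℤ)) (δ3 * 2 ^ β * (a3 : ℤ)) :=
  u_factor_eq_one_iff_two_adic_solubility_general a1 a2 a3 hodd1 hodd2 hodd3 δ2 δ3 hδ2 hδ3 hδ μ α β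
    hsum
end
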